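/- arXiv:1508.01797 — 3 statements merged into one kernel-verified Lean document; each statement's English description precedes it below -/
import Mathlib

section
/- The function f(z) = z·ln(z) − ln Γ(z+1) on [0,∞) (with f(0)=0) is convex on (0,∞), satisfies f(0)=0, and consequently for any nonnegative reals λ₁,...,λ_d with ∑ᵢ λᵢ = n, one has ∑ᵢ f(λᵢ) ≤ f(n), i.e., ∏ᵢ λᵢ^{λᵢ}/λᵢ! ≤ n^n/n!. -/
open Real Finset Set

/-! Write `log Γ(z+1)` as the limit of Gauss's finite products
`logGammaSeq (z+1) n = (z+1) log n + log n! - ∑_{m ≤ n} log (z+1+m)`. Each approximant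
`z log z - logGammaSeq (z+1) n` has second derivative `1/z - ∑_{m ≤ n} 1/(z+1+m)²`, which is
nonnegative because `1/(z+1+m)² ≤ 1/(z+m) - 1/(z+m+1)` telescopes; convexity passes to the
limit. A convex `f` on `[0,∞)` with `f 0 = 0` satisfies `f (λᵢ) ≤ (λᵢ/n) f n` for `0 ≤ λᵢ ≤ n`,
and summing over `i` gives `∑ f(λᵢ) ≤ f n`. -/

open Filter Topology Real.BohrMollerup

theorem ConvexOn.of_tendsto {E ι : Type*} [AddCommGroup E] [Module ℝ E] {s : Set E}
    {l : Filter ι} [l.NeBot] {g : ι → E → ℝ} {f : E → ℝ} (hs : Convex ℝ s)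
    (hg : ∀ᶠ i in l, ConvexOn ℝ s (g i)) (hgf : ∀ x ∈ s, Tendsto (fun i ↦ g i x) l (𝓝 (f x))) :
    ConvexOn ℝ s f :=
  ⟨hs, fun x hx y hy a b ha hb hab ↦ le_of_tendsto_of_tendsto (hgf _ (hs hx hy ha hb hab))
    (((hgf x hx).const_smul a).add ((hgf y hy).const_smul b))
    (hg.mono fun _ hi ↦ hi.2 hx hy ha hb hab)⟩

theorem ConvexOn.map_mul_le {f : ℝ → ℝ} (hf : ConvexOn ℝ (Ici 0) f) (h0 : f 0 ≤ 0)
    {t y : ℝ} (ht₀ : 0 ≤ t) (ht₁ : t ≤ 1) (hy : 0 ≤ y) : f (t * y) ≤ t * f y := by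
  have h := hf.2 (mem_Ici.2 le_rfl) (mem_Ici.2 hy) (sub_nonneg.2 ht₁) ht₀ (sub_add_cancel 1 t)
  simp only [smul_eq_mul, mul_zero, zero_add] at h
  linarith [mul_nonpos_of_nonneg_of_nonpos (sub_nonneg.2 ht₁) h0]

theorem ConvexOn.sum_map_le_map_sum {ι : Type*} {f : ℝ → ℝ} (hf : ConvexOn ℝ (Ici 0) f)
    (h0 : f 0 = 0) (s : Finset ι) {x : ι → ℝ} (hx : ∀ i ∈ s, 0 ≤ x i) :
    ∑ i ∈ s, f (x i) ≤ f (∑ i ∈ s, x i) := by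
  rcases (sum_nonneg hx).eq_or_lt with hS | hS
  · have hx0 : ∀ i ∈ s, x i = 0 := (sum_eq_zero_iff_of_nonneg hx).1 hS.symm
    rw [sum_eq_zero fun i hi ↦ by rw [hx0 i hi, h0], ← hS, h0]
  · set S := ∑ i ∈ s, x i
    have hle : ∀ i ∈ s, f (x i) ≤ x i / S * f S := fun i hi ↦ by
      simpa [div_mul_cancel₀ _ hS.ne'] using hf.map_mul_le h0.le (div_nonneg (hx i hi) hS.le)
        ((div_le_one hS).2 (single_le_sum hx hi)) hS.le
    calc ∑ i ∈ s, f (x i) ≤ ∑ i ∈ s, x i / S * f S := sum_le_sum hle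
      _ = f S := by rw [← sum_mul, ← sum_div, div_self hS.ne', one_mul]

theorem sum_range_inv_sq_le_inv {z : ℝ} (hz : 0 < z) (N : ℕ) :
    ∑ m ∈ range N, ((z + 1 + m) ^ 2)⁻¹ ≤ z⁻¹ := by
  have hstep : ∀ m : ℕ, ((z + 1 + m) ^ 2)⁻¹ ≤ (z + m)⁻¹ - (z + (m + 1 : ℕ))⁻¹ := fun m ↦ by
    have : 0 < z + m := by positivity
    rw [Nat.cast_succ, inv_sub_inv (by positivity) (by positivity),
      show z + (m + 1) - (z + m) = 1 by ring, one_div]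
    exact inv_anti₀ (by positivity) (by nlinarith)
  calc ∑ m ∈ range N, ((z + 1 + m) ^ 2)⁻¹
      ≤ ∑ m ∈ range N, ((z + m)⁻¹ - (z + (m + 1 : ℕ))⁻¹) := sum_le_sum fun m _ ↦ hstep m
    _ = z⁻¹ - (z + N)⁻¹ := by rw [sum_range_sub' (fun m : ℕ ↦ (z + m)⁻¹)]; simp
    _ ≤ z⁻¹ := sub_le_self _ (by positivity)

theorem hasDerivAt_logGammaSeq {x : ℝ} (hx : 0 < x) (n : ℕ) :
    HasDerivAt (logGammaSeq · n) (log n - ∑ m ∈ range (n + 1), (x + m)⁻¹) x := by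
  have hlog : ∀ m ∈ range (n + 1), HasDerivAt (fun y ↦ log (y + m)) (x + m)⁻¹ x := fun m _ ↦ by
    simpa using ((hasDerivAt_id x).add_const (m : ℝ)).log (by positivity)
  have h := (((hasDerivAt_id x).mul_const (log n)).add_const (log (n.factorial : ℝ))).fun_sub
    (HasDerivAt.fun_sum hlog)
  simp only [id, one_mul] at h
  exact h

theorem hasDerivAt_sum_inv_add {x : ℝ} (hx : 0 < x) (N : ℕ) :
    HasDerivAt (fun y : ℝ ↦ ∑ m ∈ range N, (y + m)⁻¹) (-∑ m ∈ range N, ((x + m) ^ 2)⁻¹) x := by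
  rw [← sum_neg_distrib]
  exact HasDerivAt.fun_sum fun m _ ↦
    (hasDerivAt_inv (by positivity)).comp_add_const x (m : ℝ)

theorem convexOn_mul_log_sub_logGammaSeq (n : ℕ) :
    ConvexOn ℝ (Ici 0) (fun z ↦ z * log z - logGammaSeq (z + 1) n) := by
  refine convexOn_of_hasDerivWithinAt2_nonneg (convex_Ici 0)
    (f' := fun z ↦ log z + 1 - (log n - ∑ m ∈ range (n + 1), (z + 1 + m)⁻¹))
    (f'' := fun z ↦ z⁻¹ - ∑ m ∈ range (n + 1), ((z + 1 + m) ^ 2)⁻¹) ?_ ?_ ?_ ?_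
  · refine continuous_mul_log.continuousOn.sub fun z hz ↦ ?_
    exact ((hasDerivAt_logGammaSeq (add_pos_of_nonneg_of_pos hz one_pos) n).comp_add_const z 1
      ).continuousAt.continuousWithinAt
  all_goals simp only [interior_Ici, Set.mem_Ioi]; intro z hz
  · exact ((hasDerivAt_mul_log hz.ne').sub
      ((hasDerivAt_logGammaSeq (by positivity) n).comp_add_const z 1)).hasDerivWithinAt
  · refine (((hasDerivAt_log hz.ne').add_const 1).sub
      (((hasDerivAt_sum_inv_add (by positivity) (n + 1)).comp_add_const z 1).const_sub (log n))
      ).hasDerivWithinAt.congr_deriv ?_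
    ring
  · exact sub_nonneg.2 (sum_range_inv_sq_le_inv hz _)

theorem convexOn_mul_log_sub_log_Gamma_add_one :
    ConvexOn ℝ (Ici 0) (fun z ↦ z * log z - log (Gamma (z + 1))) :=
  ConvexOn.of_tendsto (l := atTop) (convex_Ici 0)
    (Eventually.of_forall convexOn_mul_log_sub_logGammaSeq) fun _ hz ↦
      tendsto_const_nhds.sub (tendsto_log_gamma (add_pos_of_nonneg_of_pos hz one_pos))

/-- `f(z) = z ln z − ln Γ(z+1)` is convex on `(0,∞)`, vanishes at `0`, and consequently
for nonnegative reals `λ₁,…,λ_d` summing to `n` one has `∑ᵢ f(λᵢ) ≤ f(n)`. -/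
theorem convex_superadditive_gamma (d : ℕ) :
    (ConvexOn ℝ (Set.Ioi (0:ℝ)) (fun z : ℝ => z * Real.log z - Real.log (Real.Gamma (z + 1))))
    ∧ ((fun z : ℝ => z * Real.log z - Real.log (Real.Gamma (z + 1))) 0 = 0)
    ∧ (∀ (n : ℝ) (lam : Fin d → ℝ), (∀ i, 0 ≤ lam i) → ∑ i, lam i = n →
        ∑ i, (lam i * Real.log (lam i) - Real.log (Real.Gamma (lam i + 1)))
          ≤ n * Real.log n - Real.log (Real.Gamma (n + 1))) := by
  have hconv := convexOn_mul_log_sub_log_Gamma_add_one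
  have hzero : (fun z : ℝ ↦ z * log z - log (Gamma (z + 1))) 0 = 0 := by simp
  refine ⟨hconv.subset Ioi_subset_Ici_self (convex_Ioi 0), hzero, ?_⟩
  rintro n lam hlam rfl
  exact hconv.sum_map_le_map_sum hzero univ fun i _ ↦ hlam i
end

section
/- With respect to the uniform probability measure on the simplex, exp(n·H(λ/n)) · ∫_{Δ_{d−1}} s^λ ds ≥ (n+d)^{−d} for any partition λ of n into at most d nonnegative integer parts. -/
/-!
Write `P = ∏ᵢ (λᵢ/n)^λᵢ`, so that `exp(n·H(λ/n)) = P⁻¹`. Let `p = λ/n`, a point of the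
simplex `S`, and `ε = 1/(n+d+1)`. On the homothetic copy `(1-ε)p + εS ⊆ S` every coordinate of `s`
is at least `(1-ε)` times that of `p`, so `s^λ ≥ (1-ε)^n P` there. That copy carries the fraction
`ε^d` of the volume of `S`, hence the average of `s^λ` over `S` is at least `ε^d (1-ε)^n P`, and by
Bernoulli's inequality `ε^d (1-ε)^n ≥ ε^d (1 - nε) ≥ ε^(d+1)`.
-/

open Real Finset MeasureTheory
open scoped Pointwise

lemma natCast_div_pow_self_pos (k : ℕ) {n : ℕ} (hn : 0 < n) : 0 < ((k : ℝ) / n) ^ k := by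
  rcases k.eq_zero_or_pos with rfl | hk
  · simp
  · positivity

lemma exp_mul_neg_sum_mul_log_div {ι : Type*} [Fintype ι] (k : ι → ℕ) {n : ℕ} (hn : 0 < n) :
    exp (n * -∑ i, ((k i : ℝ) / n) * log ((k i : ℝ) / n)) = (∏ i, ((k i : ℝ) / n) ^ k i)⁻¹ := by
  have hn' : (n : ℝ) ≠ 0 := by positivity
  have hterm : ∀ i, (n : ℝ) * ((k i : ℝ) / n * log ((k i : ℝ) / n)) = log (((k i : ℝ) / n) ^ k i) := by
    intro i
    rw [log_pow, ← mul_assoc, mul_div_cancel₀ _ hn']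
  rw [mul_neg, mul_sum, sum_congr rfl fun i _ => hterm i, exp_neg, exp_sum,
    prod_congr rfl fun i _ => exp_log (natCast_div_pow_self_pos (k i) hn)]

lemma inv_pow_succ_le_inv_pow_mul_one_sub_inv_pow {N : ℝ} {n : ℕ} (hN : (n : ℝ) + 1 ≤ N) (d : ℕ) :
    (N ^ (d + 1))⁻¹ ≤ N⁻¹ ^ d * (1 - N⁻¹) ^ n := by
  have hN0 : 0 < N := by linarith [n.cast_nonneg (α := ℝ)]
  have hbernoulli : 1 - n * N⁻¹ ≤ (1 - N⁻¹) ^ n := by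
    simpa [sub_eq_add_neg] using
      one_add_mul_le_pow (a := -N⁻¹) (by linarith [inv_le_one_of_one_le₀ (by linarith : (1 : ℝ) ≤ N)]) n
  have hN1 : N⁻¹ ≤ 1 - n * N⁻¹ := by
    rw [← sub_nonneg]
    field_simp
    linarith
  rw [← inv_pow, pow_succ]
  gcongr
  exact hN1.trans hbernoulli

/-- The probability simplex on `Option ι`, with its extra coordinate `1 - ∑ y` dropped. -/
def cornerSimplex (ι : Type*) [Fintype ι] : Set (ι → ℝ) :=
  {y | (∀ i, 0 ≤ y i) ∧ ∑ i, y i ≤ 1}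

section cornerSimplex

variable {ι : Type*} [Fintype ι]

lemma isClosed_cornerSimplex : IsClosed (cornerSimplex ι) := by
  rw [cornerSimplex, Set.ofPred_and, Set.ofPred_forall]
  exact (isClosed_iInter fun i => isClosed_le continuous_const (continuous_apply i)).inter
    (isClosed_le (continuous_finsetSum _ fun i _ => continuous_apply i) continuous_const)

lemma cornerSimplex_subset_Icc : cornerSimplex ι ⊆ Set.Icc 0 1 := by
  rintro y ⟨hy0, hy1⟩
  exact ⟨hy0, fun i => (single_le_sum (fun j _ => hy0 j) (mem_univ i)).trans hy1⟩

lemma isCompact_cornerSimplex : IsCompact (cornerSimplex ι) :=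
  isCompact_Icc.of_isClosed_subset isClosed_cornerSimplex cornerSimplex_subset_Icc

lemma Icc_subset_cornerSimplex :
    Set.Icc (0 : ι → ℝ) (fun _ => ((Fintype.card ι : ℝ) + 1)⁻¹) ⊆ cornerSimplex ι := by
  rintro y ⟨hy0, hy1⟩
  refine ⟨hy0, ?_⟩
  calc ∑ i, y i ≤ ∑ _i : ι, ((Fintype.card ι : ℝ) + 1)⁻¹ := sum_le_sum fun i _ => hy1 i
    _ ≤ 1 := by
      rw [sum_const, card_univ, nsmul_eq_mul, ← div_eq_mul_inv, div_le_one (by positivity)]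
      linarith

lemma volume_cornerSimplex_pos : 0 < volume (cornerSimplex ι) := by
  refine lt_of_lt_of_le ?_ (measure_mono Icc_subset_cornerSimplex)
  rw [Real.volume_Icc_pi]
  exact CanonicallyOrderedAdd.prod_pos.mpr fun i _ => ENNReal.ofReal_pos.mpr (by simp; positivity)

lemma le_of_mem_vadd_smul_cornerSimplex {p y : ι → ℝ} {ε : ℝ} (hε : 0 ≤ ε)
    (hy : y ∈ (1 - ε) • p +ᵥ ε • cornerSimplex ι) :
    (∀ i, (1 - ε) * p i ≤ y i) ∧ (1 - ε) * (1 - ∑ i, p i) ≤ 1 - ∑ i, y i := by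
  obtain ⟨_, ⟨z, ⟨hz0, hz1⟩, rfl⟩, rfl⟩ := hy
  refine ⟨fun i => ?_, ?_⟩
  · simpa using mul_nonneg hε (hz0 i)
  · simp only [vadd_eq_add, Pi.add_apply, Pi.smul_apply, smul_eq_mul, sum_add_distrib,
      ← mul_sum]
    nlinarith

lemma vadd_smul_cornerSimplex_subset {p : ι → ℝ} (hp : p ∈ cornerSimplex ι) {ε : ℝ}
    (hε0 : 0 ≤ ε) (hε1 : ε ≤ 1) :
    (1 - ε) • p +ᵥ ε • cornerSimplex ι ⊆ cornerSimplex ι := by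
  intro y hy
  obtain ⟨hcoord, hlast⟩ := le_of_mem_vadd_smul_cornerSimplex hε0 hy
  have h1ε : 0 ≤ 1 - ε := by linarith
  refine ⟨fun i => (mul_nonneg h1ε (hp.1 i)).trans (hcoord i), ?_⟩
  nlinarith [mul_nonneg h1ε (sub_nonneg.mpr hp.2)]

end cornerSimplex

lemma pow_finrank_mul_le_setIntegral_div {E : Type*} [NormedAddCommGroup E] [NormedSpace ℝ E]
    [MeasurableSpace E] [BorelSpace E] [FiniteDimensional ℝ E] (μ : Measure E)
    [μ.IsAddHaarMeasure] {S : Set E} {f : E → ℝ} {a : E} {ε m : ℝ} (hS : MeasurableSet S)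
    (hS0 : μ S ≠ 0) (hS_top : μ S ≠ ⊤) (hε : 0 < ε) (hsub : a +ᵥ ε • S ⊆ S)
    (hf : IntegrableOn f S μ) (hf0 : ∀ y ∈ S, 0 ≤ f y) (hm : ∀ y ∈ a +ᵥ ε • S, m ≤ f y) :
    ε ^ Module.finrank ℝ E * m ≤ (∫ y in S, f y ∂μ) / μ.real S := by
  have hvol : μ.real (a +ᵥ ε • S) = ε ^ Module.finrank ℝ E * μ.real S := by
    simp only [measureReal_def, measure_vadd, Measure.addHaar_smul, ENNReal.toReal_mul,
      abs_of_pos (pow_pos hε _), ENNReal.toReal_ofReal (pow_pos hε _).le]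
  have hsmall : m * μ.real (a +ᵥ ε • S) ≤ ∫ y in a +ᵥ ε • S, f y ∂μ :=
    setIntegral_ge_of_const_le_real ((hS.const_smul₀ ε).const_vadd a)
      (measure_ne_top_of_subset hsub hS_top) hm (hf.mono_set hsub)
  have hmono : ∫ y in a +ᵥ ε • S, f y ∂μ ≤ ∫ y in S, f y ∂μ :=
    setIntegral_mono_set hf (ae_restrict_of_forall_mem hS hf0) hsub.eventuallyLE
  rw [le_div_iff₀ (show 0 < μ.real S from ENNReal.toReal_pos hS0 hS_top)]
  rw [hvol] at hsmall
  linarith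

section simplexMonomial

variable {d : ℕ}

lemma one_sub_sum_castSucc_eq_last {q : Fin (d + 1) → ℝ} (hq : ∑ i, q i = 1) :
    1 - ∑ i : Fin d, q i.castSucc = q (Fin.last d) := by
  rw [Fin.sum_univ_castSucc] at hq
  linarith

lemma castSucc_mem_cornerSimplex {q : Fin (d + 1) → ℝ} (hq : q ∈ stdSimplex ℝ (Fin (d + 1))) :
    (fun i : Fin d => q i.castSucc) ∈ cornerSimplex (Fin d) :=
  ⟨fun i => hq.1 _, by linarith [one_sub_sum_castSucc_eq_last hq.2, hq.1 (Fin.last d)]⟩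

/-- The monomial `s ^ k` on the probability simplex in `ℝ^{d+1}`, in the coordinates of the corner
simplex in `ℝ^d`. -/
def simplexMonomial (k : Fin (d + 1) → ℕ) (y : Fin d → ℝ) : ℝ :=
  (∏ i, y i ^ k i.castSucc) * (1 - ∑ i, y i) ^ k (Fin.last d)

variable (k : Fin (d + 1) → ℕ)

lemma continuous_simplexMonomial : Continuous (simplexMonomial k) := by
  unfold simplexMonomial
  fun_prop

lemma simplexMonomial_nonneg {y : Fin d → ℝ} (hy : y ∈ cornerSimplex (Fin d)) :
    0 ≤ simplexMonomial k y :=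
  mul_nonneg (prod_nonneg fun i _ => pow_nonneg (hy.1 i) _) (pow_nonneg (sub_nonneg.mpr hy.2) _)

lemma prod_pow_le_simplexMonomial {q : Fin (d + 1) → ℝ} {y : Fin d → ℝ} (hq : ∀ i, 0 ≤ q i)
    (hy : ∀ i, q i.castSucc ≤ y i) (hlast : q (Fin.last d) ≤ 1 - ∑ i, y i) :
    ∏ i, q i ^ k i ≤ simplexMonomial k y := by
  rw [Fin.prod_univ_castSucc]
  exact mul_le_mul
    (prod_le_prod (fun i _ => pow_nonneg (hq _) _) fun i _ => pow_le_pow_left₀ (hq _) (hy i) _)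
    (pow_le_pow_left₀ (hq _) hlast _) (pow_nonneg (hq _) _)
    (prod_nonneg fun i _ => pow_nonneg ((hq _).trans (hy i)) _)

lemma one_sub_pow_mul_prod_pow_le_simplexMonomial {q : Fin (d + 1) → ℝ}
    (hq : q ∈ stdSimplex ℝ (Fin (d + 1))) {ε : ℝ} (hε0 : 0 ≤ ε) (hε1 : ε ≤ 1) {y : Fin d → ℝ}
    (hy : y ∈ (1 - ε) • (fun i : Fin d => q i.castSucc) +ᵥ ε • cornerSimplex (Fin d)) :
    (1 - ε) ^ (∑ i, k i) * ∏ i, q i ^ k i ≤ simplexMonomial k y := by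
  obtain ⟨hcoord, hlast⟩ := le_of_mem_vadd_smul_cornerSimplex hε0 hy
  rw [one_sub_sum_castSucc_eq_last hq.2] at hlast
  rw [← prod_pow_eq_pow_sum, ← prod_mul_distrib]
  simp_rw [← mul_pow]
  exact prod_pow_le_simplexMonomial k (fun i => mul_nonneg (by linarith) (hq.1 i)) hcoord hlast

end simplexMonomial

/-- With respect to the uniform probability measure on the probability simplex in `ℝ^{d+1}`
(parametrized by its first `d` coordinates, Lebesgue measure normalized to mass one),
`exp(n·H(λ/n)) · ∫ s^λ ds ≥ (n + (d+1))^{-(d+1)}` for any partition `λ` of `n`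
into at most `d+1` nonnegative integer parts. -/
theorem exp_entropy_mul_simplex_moment_ge (d n : ℕ) (hn : 0 < n)
    (lam : Fin (d + 1) → ℕ) (hsum : ∑ i, lam i = n) :
    Real.exp (n * (-∑ i, ((lam i : ℝ) / n) * Real.log ((lam i : ℝ) / n))) *
      ((∫ y in {y : Fin d → ℝ | (∀ i, 0 ≤ y i) ∧ ∑ i, y i ≤ 1},
          (∏ i : Fin d, y i ^ lam i.castSucc) * (1 - ∑ i, y i) ^ lam (Fin.last d)) /
        (MeasureTheory.volume {y : Fin d → ℝ | (∀ i, 0 ≤ y i) ∧ ∑ i, y i ≤ 1}).toReal)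
    ≥ (((n : ℝ) + (d + 1)) ^ (d + 1))⁻¹ := by
  change _ ≤ _ * ((∫ y in cornerSimplex (Fin d), simplexMonomial lam y) /
    volume.real (cornerSimplex (Fin d)))
  rw [exp_mul_neg_sum_mul_log_div lam hn]
  set P := ∏ i, ((lam i : ℝ) / n) ^ lam i
  have hP : 0 < P := prod_pos fun i _ => natCast_div_pow_self_pos (lam i) hn
  have hq : (fun i => (lam i : ℝ) / n) ∈ stdSimplex ℝ (Fin (d + 1)) := by
    refine ⟨fun i => by positivity, ?_⟩
    rw [← sum_div, div_eq_one_iff_eq (by positivity)]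
    exact_mod_cast hsum
  set ε := ((n : ℝ) + (d + 1))⁻¹
  have hε0 : 0 < ε := by positivity
  have hε1 : ε ≤ 1 := inv_le_one_of_one_le₀ (by linarith [n.cast_nonneg (α := ℝ)])
  have havg := pow_finrank_mul_le_setIntegral_div volume isClosed_cornerSimplex.measurableSet
    volume_cornerSimplex_pos.ne' isCompact_cornerSimplex.measure_lt_top.ne hε0
    (vadd_smul_cornerSimplex_subset (castSucc_mem_cornerSimplex hq) hε0.le hε1)
    ((continuous_simplexMonomial lam).continuousOn.integrableOn_compact isCompact_cornerSimplex)
    (fun y => simplexMonomial_nonneg lam)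
    (fun y => one_sub_pow_mul_prod_pow_le_simplexMonomial lam hq hε0.le hε1)
  rw [Module.finrank_fin_fun, hsum] at havg
  calc (((n : ℝ) + (d + 1)) ^ (d + 1))⁻¹ ≤ ε ^ d * (1 - ε) ^ n :=
        inv_pow_succ_le_inv_pow_mul_one_sub_inv_pow (by linarith) d
    _ = P⁻¹ * (ε ^ d * ((1 - ε) ^ n * P)) := by field_simp
    _ ≤ _ := by gcongr
end

section
/- Let x ∈ ℝ^d with x₁ ≥ x₂ ≥ ⋯ ≥ x_d ≥ 0 and let λ ∈ ℕ^d be a nonincreasing vector. Then over all nonnegative integer vectors ν majorized by λ (i.e., ∑_{i≤m} ν↓ᵢ ≤ ∑_{i≤m} λᵢ for all m < d and ∑ᵢ νᵢ = ∑ᵢ λᵢ), the maximum of the monomial x^ν = ∏ᵢ xᵢ^{νᵢ} equals x^λ. -/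
open Real Finset

private lemma abel_aux (a c : ℕ → ℝ) : ∀ n : ℕ, (∀ i < n, a (i+1) ≤ a i) →
    (∀ j ≤ n, 0 ≤ ∑ i ∈ range (j+1), c i) →
    (∑ i ∈ range (n+1), c i) * a n ≤ ∑ i ∈ range (n+1), c i * a i := by
  intro n
  induction n with
  | zero => intro _ _; simp
  | succ n ih =>
    intro ha hc
    rw [Finset.sum_range_succ, Finset.sum_range_succ (f := fun i => c i * a i), add_mul]
    have h1 : (∑ i ∈ range (n+1), c i) * a (n+1) ≤ (∑ i ∈ range (n+1), c i) * a n :=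
      mul_le_mul_of_nonneg_left (ha n (Nat.lt_succ_self n)) (hc n (Nat.le_succ n))
    have h2 := ih (fun i hi => ha i (hi.trans (Nat.lt_succ_self n)))
      (fun j hj => hc j (hj.trans (Nat.le_succ n)))
    linarith

private lemma key_pos (d : ℕ) (x : ℕ → ℝ) (hx : ∀ i < d, 0 < x i)
    (hsort : ∀ i, i + 1 < d → x (i+1) ≤ x i) (nu lam : ℕ → ℕ)
    (hpre : ∀ j < d, ∑ i ∈ range (j+1), nu i ≤ ∑ i ∈ range (j+1), lam i)
    (htot : ∑ i ∈ range d, nu i = ∑ i ∈ range d, lam i) :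
    ∏ i ∈ range d, x i ^ nu i ≤ ∏ i ∈ range d, x i ^ lam i := by
  rcases Nat.eq_zero_or_pos d with hd | hd
  · simp [hd]
  obtain ⟨n, rfl⟩ : ∃ n, d = n + 1 := ⟨d - 1, by omega⟩
  set a : ℕ → ℝ := fun i => Real.log (x i) with ha_def
  set c : ℕ → ℝ := fun i => (lam i : ℝ) - (nu i : ℝ) with hc_def
  have habel := abel_aux a c n
    (fun i hi => Real.log_le_log (hx _ (by omega)) (hsort i (by omega)))
    (fun j hj => by
      have := hpre j (by omega)
      simp only [hc_def, Finset.sum_sub_distrib]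
      have h1 : ((∑ i ∈ range (j+1), nu i : ℕ) : ℝ) ≤ ((∑ i ∈ range (j+1), lam i : ℕ) : ℝ) := by
        exact_mod_cast this
      push_cast at h1 ⊢
      linarith)
  have hc0 : (∑ i ∈ range (n+1), c i) = 0 := by
    simp only [hc_def, Finset.sum_sub_distrib]
    have : ((∑ i ∈ range (n+1), nu i : ℕ) : ℝ) = ((∑ i ∈ range (n+1), lam i : ℕ) : ℝ) := by
      exact_mod_cast htot
    push_cast at this ⊢
    linarith
  rw [hc0, zero_mul] at habel
  have hsum : ∑ i ∈ range (n+1), (nu i : ℝ) * a i ≤ ∑ i ∈ range (n+1), (lam i : ℝ) * a i := by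
    have : ∑ i ∈ range (n+1), c i * a i
        = ∑ i ∈ range (n+1), (lam i : ℝ) * a i - ∑ i ∈ range (n+1), (nu i : ℝ) * a i := by
      rw [← Finset.sum_sub_distrib]
      congr 1; ext i; simp [hc_def]; ring
    linarith [this ▸ habel]
  have hexp : ∀ m : ℕ → ℕ, Real.exp (∑ i ∈ range (n+1), (m i : ℝ) * a i)
      = ∏ i ∈ range (n+1), x i ^ m i := by
    intro m
    rw [Real.exp_sum]
    refine Finset.prod_congr rfl fun i hi => ?_
    rw [mul_comm, Real.exp_mul, Real.exp_log (hx i (mem_range.mp hi)), Real.rpow_natCast]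
  calc ∏ i ∈ range (n+1), x i ^ nu i
      = Real.exp (∑ i ∈ range (n+1), (nu i : ℝ) * a i) := (hexp nu).symm
    _ ≤ Real.exp (∑ i ∈ range (n+1), (lam i : ℝ) * a i) := Real.exp_le_exp.mpr hsum
    _ = _ := hexp lam

private lemma key_nonneg (d : ℕ) (x : ℕ → ℝ) (hx : ∀ i < d, 0 ≤ x i)
    (hsort : ∀ i, i + 1 < d → x (i+1) ≤ x i) (nu lam : ℕ → ℕ)
    (hpre : ∀ j < d, ∑ i ∈ range (j+1), nu i ≤ ∑ i ∈ range (j+1), lam i)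
    (htot : ∑ i ∈ range d, nu i = ∑ i ∈ range d, lam i) :
    ∏ i ∈ range d, x i ^ nu i ≤ ∏ i ∈ range d, x i ^ lam i := by
  have h : ∀ ε : ℝ, 0 < ε →
      ∏ i ∈ range d, (x i + ε) ^ nu i ≤ ∏ i ∈ range d, (x i + ε) ^ lam i := by
    intro ε hε
    exact key_pos d (fun i => x i + ε)
      (fun i hi => by have := hx i hi; linarith)
      (fun i hi => by have := hsort i hi; linarith) nu lam hpre htot
  have hcont : ∀ m : ℕ → ℕ, Filter.Tendsto (fun ε : ℝ => ∏ i ∈ range d, (x i + ε) ^ m i)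
      (nhdsWithin 0 (Set.Ioi 0)) (nhds (∏ i ∈ range d, x i ^ m i)) := by
    intro m
    have : Continuous (fun ε : ℝ => ∏ i ∈ range d, (x i + ε) ^ m i) := by
      continuity
    have := this.tendsto 0
    simpa using this.mono_left nhdsWithin_le_nhds
  exact le_of_tendsto_of_tendsto (hcont nu) (hcont lam)
    (eventually_nhdsWithin_of_forall (fun ε hε => h ε hε))

private lemma filter_sum_eq (d k : ℕ) (hk : k ≤ d) (f : Fin d → ℕ) :
    ∑ i ∈ Finset.univ.filter (fun i : Fin d => (i : ℕ) < k), f i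
      = ∑ j ∈ range k, (fun j => if h : j < d then f ⟨j, h⟩ else 0) j := by
  rw [Finset.sum_filter]
  have hag : ∀ a : Fin d, (if (a : ℕ) < k then f a else 0)
      = (fun j => if j < k then (if h : j < d then f ⟨j, h⟩ else 0) else 0) (a : ℕ) := by
    intro a; simp [a.2]
  rw [Finset.sum_congr rfl (fun a _ => hag a),
    Fin.sum_univ_eq_sum_range (fun j => if j < k then (if h : j < d then f ⟨j, h⟩ else 0) else 0),
    ← Finset.sum_filter]
  congr 1
  ext j; simp only [mem_filter, mem_range]; omega

private lemma card_filter_lt (d k : ℕ) (hk : k ≤ d) :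
    (Finset.univ.filter (fun i : Fin d => (i : ℕ) < k)).card = k := by
  rw [Finset.card_eq_sum_ones, filter_sum_eq d k hk (fun _ => 1)]
  simp only
  rw [Finset.sum_congr rfl (fun j hj => dif_pos (lt_of_lt_of_le (mem_range.mp hj) hk))]
  simp

private lemma sum_le_top (d : ℕ) (lam : Fin d → ℕ)
    (hlam_sorted : ∀ i j : Fin d, i ≤ j → lam j ≤ lam i) (S : Finset (Fin d)) :
    ∑ i ∈ S, lam i ≤ ∑ i ∈ Finset.univ.filter (fun i : Fin d => (i : ℕ) < S.card), lam i := by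
  have hcard : S.card ≤ d := by simpa using Finset.card_le_univ S
  set m := S.card with hm
  let e := S.orderIsoOfFin hm.symm
  have hmono : ∀ n : ℕ, ∀ hn : n < m, n ≤ ((e ⟨n, hn⟩ : Fin d) : ℕ) := by
    intro n
    induction n with
    | zero => intro hn; exact Nat.zero_le _
    | succ n ih =>
      intro hn
      have hn' : n < m := Nat.lt_of_succ_lt hn
      have hlt : ((e ⟨n, hn'⟩ : Fin d) : ℕ) < ((e ⟨n+1, hn⟩ : Fin d) : ℕ) := by
        have : (⟨n, hn'⟩ : Fin m) < ⟨n+1, hn⟩ := by simp [Fin.lt_def]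
        exact_mod_cast (e.lt_iff_lt.mpr this)
      have h2 := ih hn'
      omega
  have h1 : ∑ i ∈ S, lam i = ∑ k : Fin m, lam (e k : Fin d) := by
    rw [← Finset.sum_attach S (fun i => lam i)]
    exact (Equiv.sum_comp e.toEquiv (fun s => lam s.1)).symm
  have h2 : ∑ i ∈ Finset.univ.filter (fun i : Fin d => (i : ℕ) < m), lam i
      = ∑ k : Fin m, lam ⟨k, lt_of_lt_of_le k.2 hcard⟩ := by
    rw [filter_sum_eq d m hcard lam, ← Fin.sum_univ_eq_sum_range]
    refine Finset.sum_congr rfl fun k _ => ?_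
    simp only [dif_pos (lt_of_lt_of_le k.2 hcard)]
  rw [h1, h2]
  refine Finset.sum_le_sum fun k _ => ?_
  exact hlam_sorted _ _ (by rw [Fin.le_def]; exact hmono k k.2)

/-- For sorted nonnegative `x` and a nonincreasing integer vector `λ`, the maximum of the
monomial `x^ν` over all nonnegative integer vectors `ν` majorized by `λ` equals `x^λ`.
Majorization is expressed as: for every subset `S`, `∑_{i∈S} νᵢ ≤ ∑_{i < |S|} λᵢ`
(the right-hand side being the sum of the `|S|` largest entries of the sorted `λ`),
together with equality of the totals. -/
theorem max_monomial_majorized (d : ℕ) (x : Fin d → ℝ) (lam : Fin d → ℕ)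
    (hx_nonneg : ∀ i, 0 ≤ x i)
    (hx_sorted : ∀ i j : Fin d, i ≤ j → x j ≤ x i)
    (hlam_sorted : ∀ i j : Fin d, i ≤ j → lam j ≤ lam i) :
    IsGreatest
      { y : ℝ | ∃ ν : Fin d → ℕ,
          (∀ S : Finset (Fin d), ∑ i ∈ S, ν i ≤ ∑ i ∈ Finset.univ.filter (fun i : Fin d => (i : ℕ) < S.card), lam i)
          ∧ (∑ i, ν i = ∑ i, lam i)
          ∧ y = ∏ i, x i ^ ν i }
      (∏ i, x i ^ lam i) := by
  constructor
  · exact ⟨lam, fun S => sum_le_top d lam hlam_sorted S, rfl, rfl⟩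
  · rintro y ⟨ν, hS, htot, rfl⟩
    -- padded functions on ℕ
    set x' : ℕ → ℝ := fun j => if h : j < d then x ⟨j, h⟩ else 0 with hx'
    set nu' : ℕ → ℕ := fun j => if h : j < d then ν ⟨j, h⟩ else 0 with hnu'
    set lam' : ℕ → ℕ := fun j => if h : j < d then lam ⟨j, h⟩ else 0 with hlam'
    have hxprod : ∀ (m : Fin d → ℕ) (m' : ℕ → ℕ),
        m' = (fun j => if h : j < d then m ⟨j, h⟩ else 0) →
        ∏ i, x i ^ m i = ∏ j ∈ range d, x' j ^ m' j := by
      intro m m' hm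
      rw [show (fun i : Fin d => x i ^ m i) = (fun i : Fin d => (fun j => x' j ^ m' j) (i : ℕ))
        from funext fun i => by simp [hx', hm, i.2]]
      exact Fin.prod_univ_eq_prod_range (fun j => x' j ^ m' j) d
    have hsumm : ∀ (m : Fin d → ℕ) (m' : ℕ → ℕ),
        m' = (fun j => if h : j < d then m ⟨j, h⟩ else 0) →
        ∑ i, m i = ∑ j ∈ range d, m' j := by
      intro m m' hm
      rw [show (fun i : Fin d => m i) = (fun i : Fin d => m' (i : ℕ))
        from funext fun i => by simp [hm, i.2]]
      exact Fin.sum_univ_eq_sum_range m' d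
    rw [hxprod ν nu' hnu', hxprod lam lam' hlam']
    apply key_nonneg
    · intro i hi; simp only [hx', dif_pos hi]; exact hx_nonneg _
    · intro i hi
      simp only [hx', dif_pos hi, dif_pos (Nat.lt_of_succ_lt hi)]
      exact hx_sorted ⟨i, Nat.lt_of_succ_lt hi⟩ ⟨i+1, hi⟩ (by simp [Fin.le_def])
    · intro j hj
      have hj1 : j + 1 ≤ d := hj
      have hcard := card_filter_lt d (j+1) hj1
      have := hS (Finset.univ.filter (fun i : Fin d => (i : ℕ) < j + 1))
      rw [hcard] at this
      calc ∑ i ∈ range (j+1), nu' i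
          = ∑ i ∈ Finset.univ.filter (fun i : Fin d => (i : ℕ) < j + 1), ν i :=
            (filter_sum_eq d (j+1) hj1 ν).symm
        _ ≤ ∑ i ∈ Finset.univ.filter (fun i : Fin d => (i : ℕ) < j + 1), lam i := this
        _ = ∑ i ∈ range (j+1), lam' i := filter_sum_eq d (j+1) hj1 lam
    · rw [← hsumm ν nu' hnu', ← hsumm lam lam' hlam']
      exact htot
end
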